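/- arXiv:2601.01164 — 2 statements merged into one kernel-verified Lean document; each statement's English description precedes it below -/
import Mathlib

section
/- Let F be one of the graphs P_4, 2P_2, C_3, and let n ≥ 5. If G maximizes the Q-index among all connected F-free outerplanar graphs of order n, then G is isomorphic to the star K_{1,n−1}. -/
/-!
For `P₄` and `2P₂` no spectral argument is needed: a connected graph on at least four vertices
containing neither is already a star. For `C₃`, a triangle-free graph with a universal vertex is a
star. Otherwise all degrees are below `n - 1`, and using the degree vector as a Collatz–Wielandt
test vector gives `q(G) ≤ max_u η(u)`. Triangle-freeness gives `∑_{v ∼ u} d(v) ≤ d(u) (n - d(u))`,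
and since outerplanar graphs are `K_{2,3}`-free this is strict, i.e. `η(u) < n`. Hence
`q(G) < n ≤ q(K_{1,n-1})`, contradicting maximality.
-/

open scoped Classical

namespace OuterplanarQ

/-- Signless Laplacian matrix Q(G) = D(G) + A(G). -/
noncomputable def qMatrix {V : Type*} [Fintype V] (G : SimpleGraph V) : Matrix V V ℝ :=
  fun i j => (if i = j then (G.degree i : ℝ) else 0) + (if G.Adj i j then 1 else 0)

/-- The Q-index: the largest eigenvalue of Q(G). -/
noncomputable def qIndex {V : Type*} [Fintype V] (G : SimpleGraph V) : ℝ :=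
  sSup {μ : ℝ | ∃ x : V → ℝ, x ≠ 0 ∧ (qMatrix G).mulVec x = μ • x}

/-- Outerplanar: one-page book embedding characterization, i.e. the vertices admit a
linear ordering (injection into ℝ) such that no two edges interleave. -/
def IsOuterplanar {V : Type*} (G : SimpleGraph V) : Prop :=
  ∃ f : V → ℝ, Function.Injective f ∧
    ∀ a b c d : V, G.Adj a b → G.Adj c d →
      ¬ (f a < f c ∧ f c < f b ∧ f b < f d)

/-- `G` contains a copy of `F` as a subgraph. -/
def ContainsCopy {α β : Type*} (G : SimpleGraph α) (F : SimpleGraph β) : Prop :=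
  ∃ f : β → α, Function.Injective f ∧ ∀ a b : β, F.Adj a b → G.Adj (f a) (f b)

/-- Disjoint union of `t` copies of the path on `k` vertices. -/
def pathUnion (t k : ℕ) : SimpleGraph (Fin t × Fin k) where
  Adj a b := a.1 = b.1 ∧ (SimpleGraph.pathGraph k).Adj a.2 b.2
  symm := ⟨fun _ _ h => ⟨h.1.symm, h.2.symm⟩⟩
  loopless := ⟨fun _ h => (SimpleGraph.pathGraph k).irrefl h.2⟩

/-- Disjoint union of two graphs. -/
def disjSum {α β : Type*} (G : SimpleGraph α) (H : SimpleGraph β) : SimpleGraph (α ⊕ β) where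
  Adj a b := match a, b with
    | Sum.inl x, Sum.inl y => G.Adj x y
    | Sum.inr x, Sum.inr y => H.Adj x y
    | _, _ => False
  symm := by constructor; rintro (x|x) (y|y) h <;> simp_all <;> exact h.symm
  loopless := by constructor; rintro (x|x) h <;> simp_all

/-- The join `K₁ ∨ H` of a single vertex with `H`. -/
def cone {V : Type*} (H : SimpleGraph V) : SimpleGraph (Option V) where
  Adj a b := match a, b with
    | none, none => False
    | none, some _ => True
    | some _, none => True
    | some x, some y => H.Adj x y
  symm := by constructor; rintro (_|x) (_|y) h <;> simp_all <;> exact h.symm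
  loopless := by constructor; rintro (_|x) h <;> simp_all

/-- A disjoint union of paths: acyclic with maximum degree at most 2. -/
def IsLinearForest {V : Type*} [Fintype V] (G : SimpleGraph V) : Prop :=
  G.IsAcyclic ∧ ∀ v : V, G.degree v ≤ 2

/-- The closed neighbourhood `N[u]`. -/
def closedNbhd {V : Type*} (G : SimpleGraph V) (u : V) : Set V :=
  insert u (G.neighborSet u)

/-- The graph obtained from `G` by adding the edge `uv`. -/
def addEdge {V : Type*} (G : SimpleGraph V) (u v : V) : SimpleGraph V :=
  G ⊔ SimpleGraph.fromEdgeSet {s(u, v)}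

/-- The graph obtained from `G` by deleting the edge `uv`. -/
def delEdge {V : Type*} (G : SimpleGraph V) (u v : V) : SimpleGraph V :=
  G.deleteEdges {s(u, v)}

/-- η(u) = d(u) + (1/d(u)) · Σ_{v ∈ N(u)} d(v). -/
noncomputable def eta {V : Type*} [Fintype V] (G : SimpleGraph V) (u : V) : ℝ :=
  (G.degree u : ℝ) + (1 / (G.degree u : ℝ)) * ∑ v ∈ G.neighborFinset u, (G.degree v : ℝ)

open SimpleGraph Finset
open scoped Matrix

section Spectral

variable {V : Type*} [Fintype V]

/-- The Collatz–Wielandt bound: evaluate the eigenvalue equation at a vertex maximising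
`|x i| / w i`. -/
theorem eigenvalue_le_of_mulVec_le {M : Matrix V V ℝ} (hM : ∀ i j, 0 ≤ M i j) {w : V → ℝ}
    (hw : ∀ i, 0 < w i) {C : ℝ} (hC : ∀ i, (M *ᵥ w) i ≤ C * w i) {x : V → ℝ} (hx : x ≠ 0)
    {μ : ℝ} (hμ : M *ᵥ x = μ • x) : μ ≤ C := by
  obtain ⟨j, hj⟩ := Function.ne_iff.mp hx
  obtain ⟨i, -, hi⟩ := exists_max_image univ (fun k => |x k| / w k) ⟨j, mem_univ j⟩
  set t := |x i| / w i
  have ht : 0 < t := (div_pos (abs_pos.2 hj) (hw j)).trans_le (hi j (mem_univ j))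
  have hxt : ∀ k, |x k| ≤ t * w k := fun k => (div_le_iff₀ (hw k)).1 (hi k (mem_univ k))
  have hrow : μ * x i = ∑ k, M i k * x k := by
    simpa [Matrix.mulVec, dotProduct] using (congrFun hμ i).symm
  have key : |μ| * (t * w i) ≤ C * (t * w i) :=
    calc |μ| * (t * w i) = |μ * x i| := by rw [abs_mul, div_mul_cancel₀ _ (hw i).ne']
    _ = |∑ k, M i k * x k| := by rw [hrow]
    _ ≤ ∑ k, M i k * (t * w k) := (abs_sum_le_sum_abs _ _).trans <| sum_le_sum fun k _ => by
        rw [abs_mul, abs_of_nonneg (hM i k)]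
        exact mul_le_mul_of_nonneg_left (hxt k) (hM i k)
    _ = t * (M *ᵥ w) i := by
        simp only [Matrix.mulVec, dotProduct, mul_sum]
        exact sum_congr rfl fun k _ => by ring
    _ ≤ t * (C * w i) := mul_le_mul_of_nonneg_left (hC i) ht.le
    _ = C * (t * w i) := by ring
  exact (le_abs_self μ).trans (le_of_mul_le_mul_right key (mul_pos ht (hw i)))

theorem qMatrix_nonneg (G : SimpleGraph V) (i j : V) : 0 ≤ qMatrix G i j := by
  unfold qMatrix
  split_ifs <;> positivity

theorem qMatrix_mulVec_apply (G : SimpleGraph V) [DecidableRel G.Adj] (x : V → ℝ) (i : V) :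
    (qMatrix G *ᵥ x) i = G.degree i * x i + ∑ j ∈ G.neighborFinset i, x j := by
  simp only [qMatrix, Matrix.mulVec, dotProduct, add_mul, sum_add_distrib, ite_mul, zero_mul,
    one_mul, sum_ite_eq, mem_univ, if_true, neighborFinset_eq_filter, sum_filter]
  convert rfl

theorem bddAbove_qMatrix_eigenvalues (G : SimpleGraph V) :
    BddAbove {μ : ℝ | ∃ x : V → ℝ, x ≠ 0 ∧ qMatrix G *ᵥ x = μ • x} := by
  refine ⟨2 * Fintype.card V, fun μ ⟨x, hx, hμ⟩ => ?_⟩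
  refine eigenvalue_le_of_mulVec_le (qMatrix_nonneg G) (w := 1) (fun _ => one_pos)
    (fun i => ?_) hx hμ
  have : (G.degree i : ℝ) ≤ Fintype.card V := by exact_mod_cast (G.degree_lt_card_verts i).le
  simp only [qMatrix_mulVec_apply, Pi.one_apply, sum_const, card_neighborFinset_eq_degree,
    nsmul_eq_mul]
  linarith

theorem le_qIndex {G : SimpleGraph V} {x : V → ℝ} (hx : x ≠ 0) {μ : ℝ}
    (hμ : qMatrix G *ᵥ x = μ • x) : μ ≤ qIndex G :=
  le_csSup (bddAbove_qMatrix_eigenvalues G) ⟨x, hx, hμ⟩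

theorem qMatrix_mulVec_degree_apply (G : SimpleGraph V) {u : V} (hu : G.degree u ≠ 0) :
    (qMatrix G *ᵥ fun v => (G.degree v : ℝ)) u = G.degree u * eta G u := by
  rw [qMatrix_mulVec_apply, eta]
  field_simp

theorem qIndex_le_of_eta_le [Nonempty V] {G : SimpleGraph V} (hdeg : ∀ v, 0 < G.degree v)
    {C : ℝ} (hC : ∀ u, eta G u ≤ C) : qIndex G ≤ C := by
  obtain ⟨u⟩ := ‹Nonempty V›
  have hC0 : 0 ≤ C := le_trans (by unfold eta; positivity) (hC u)
  refine Real.sSup_le (fun μ ⟨x, hx, hμ⟩ => ?_) hC0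
  refine eigenvalue_le_of_mulVec_le (qMatrix_nonneg G) (w := fun v => (G.degree v : ℝ))
    (fun v => by exact_mod_cast hdeg v) (fun v => ?_) hx hμ
  rw [qMatrix_mulVec_degree_apply G (hdeg v).ne', mul_comm]
  exact mul_le_mul_of_nonneg_right (hC v) (Nat.cast_nonneg _)

theorem card_le_qIndex_starGraph [Nontrivial V] (r : V) :
    (Fintype.card V : ℝ) ≤ qIndex (starGraph r) := by
  have hn : ((Fintype.card V - 1 : ℕ) : ℝ) = Fintype.card V - 1 := Nat.cast_pred Fintype.card_pos
  refine le_qIndex (x := fun v => if v = r then (Fintype.card V : ℝ) - 1 else 1) ?_ ?_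
  · obtain ⟨v, hv⟩ := exists_ne r
    exact Function.ne_iff.2 ⟨v, by simp [hv]⟩
  ext v
  rw [qMatrix_mulVec_apply, Pi.smul_apply, smul_eq_mul]
  by_cases hv : v = r
  · subst hv
    rw [(neighborFinset_eq_erase_univ _ v).2 isUniversal_starGraph_self,
      sum_congr rfl fun w hw => if_neg (ne_of_mem_erase hw), degree_starGraph_center, sum_const,
      card_erase_of_mem (mem_univ v), card_univ, nsmul_eq_mul, hn]
    simp only [if_true]
    ring
  · have hN : (starGraph r).neighborFinset v = {r} := by
      ext w
      simp only [mem_neighborFinset, starGraph_adj, mem_singleton]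
      grind
    rw [hN, degree_starGraph_of_ne_center hv, sum_singleton]
    simp [hv]

end Spectral

section Outerplanar

variable {V : Type*} {G : SimpleGraph V}

theorem isOuterplanar_starGraph [Countable V] (r : V) : IsOuterplanar (starGraph r) := by
  obtain ⟨f, hf⟩ := Countable.exists_injective_nat V
  refine ⟨fun v => (f v : ℝ), Nat.cast_injective.comp hf, fun a b c d hab hcd => ?_⟩
  rw [starGraph_adj] at hab hcd
  rcases hab.2 with rfl | rfl <;> rcases hcd.2 with rfl | rfl <;> grind

/-- In the cyclic order read off the line, `v₁` and `v₂` cut the remaining vertices into the arc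
`(v₁, v₂)` and its complement; two common neighbours on the same arc would give crossing edges. -/
theorem mem_Ioo_iff_notMem_Ioo_of_common_adj {f : V → ℝ} (hf : Function.Injective f)
    (hcross : ∀ a b c d : V, G.Adj a b → G.Adj c d → ¬ (f a < f c ∧ f c < f b ∧ f b < f d))
    {v₁ v₂ w w' : V} (hv : f v₁ < f v₂) (hww' : w ≠ w') (h₁ : G.Adj v₁ w) (h₂ : G.Adj v₂ w)
    (h₁' : G.Adj v₁ w') (h₂' : G.Adj v₂ w') :
    f w ∈ Set.Ioo (f v₁) (f v₂) ↔ f w' ∉ Set.Ioo (f v₁) (f v₂) := by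
  wlog hlt : f w < f w' generalizing w w'
  · have := this hww'.symm h₁' h₂' h₁ h₂ ((hf.ne hww'.symm).lt_of_le (not_lt.1 hlt))
    tauto
  have := hf.ne h₁.ne'
  have := hf.ne h₂.ne'
  have := hf.ne h₁'.ne'
  have := hf.ne h₂'.ne'
  have := hcross w v₁ w' v₂ h₁.symm h₂'.symm
  have := hcross w v₂ v₁ w' h₂.symm h₁'
  have := hcross v₁ w' w v₂ h₁' h₂.symm
  have := hcross v₁ w v₂ w' h₁ h₂'
  simp only [Set.mem_Ioo]
  grind

theorem IsOuterplanar.card_inter_neighborFinset_le_two [Fintype V] (hG : IsOuterplanar G)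
    {v₁ v₂ : V} (hv : v₁ ≠ v₂) : #(G.neighborFinset v₁ ∩ G.neighborFinset v₂) ≤ 2 := by
  obtain ⟨f, hf, hcross⟩ := hG
  wlog hlt : f v₁ < f v₂ generalizing v₁ v₂
  · rw [inter_comm]
    exact this hv.symm ((hf.ne hv.symm).lt_of_le (not_lt.1 hlt))
  by_contra! h
  obtain ⟨a, ha, b, hb, c, hc, hab, hac, hbc⟩ := two_lt_card.1 h
  simp only [mem_inter, mem_neighborFinset] at ha hb hc
  have := mem_Ioo_iff_notMem_Ioo_of_common_adj hf hcross hlt hab ha.1 ha.2 hb.1 hb.2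
  have := mem_Ioo_iff_notMem_Ioo_of_common_adj hf hcross hlt hac ha.1 ha.2 hc.1 hc.2
  have := mem_Ioo_iff_notMem_Ioo_of_common_adj hf hcross hlt hbc hb.1 hb.2 hc.1 hc.2
  tauto

end Outerplanar

section Eta

variable {V : Type*} [Fintype V] {G : SimpleGraph V}

theorem neighborFinset_subset_compl_of_cliqueFree (hG : G.CliqueFree 3) {u v : V}
    (huv : G.Adj u v) : G.neighborFinset v ⊆ (G.neighborFinset u)ᶜ := fun w hw => by
  rw [mem_neighborFinset] at hw
  rw [mem_compl, mem_neighborFinset]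
  exact fun huw => hG {u, v, w} (is3Clique_triple_iff.2 ⟨huv, huw, hw⟩)

/-- If every neighbour of `u` were adjacent to every vertex outside `N(u)`, the sides `N(u)` and
`V \ N(u)` (which contains `u`) would span a complete bipartite graph with at least two vertices
on each side and at least five in all, hence a `K_{2,3}`. -/
theorem exists_degree_lt_card_compl_neighborFinset (h3 : G.CliqueFree 3)
    (hK : ∀ v w, v ≠ w → #(G.neighborFinset v ∩ G.neighborFinset w) ≤ 2)
    (hΔ : ∀ v, ¬ G.IsUniversal v) (h5 : 5 ≤ Fintype.card V) {u : V} (hu : 0 < G.degree u) :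
    ∃ v ∈ G.neighborFinset u, G.degree v < #(G.neighborFinset u)ᶜ := by
  by_contra! hall
  set N := G.neighborFinset u
  have hfull : ∀ v ∈ N, G.neighborFinset v = Nᶜ := fun v hv =>
    eq_of_subset_of_card_le
      (neighborFinset_subset_compl_of_cliqueFree h3 ((mem_neighborFinset _ _ _).1 hv))
      (by rw [card_neighborFinset_eq_degree]; exact hall v hv)
  have hcard : #N + #Nᶜ = Fintype.card V := card_add_card_compl N
  have hN : #N = G.degree u := card_neighborFinset_eq_degree G u
  have hdu := (degree_lt_card_sub_one G u).2 (hΔ u)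
  rcases (by omega : G.degree u = 1 ∨ G.degree u = 2 ∨ 3 ≤ G.degree u) with hd | hd | hd
  · obtain ⟨v, hv⟩ := card_pos.1 (hN ▸ hu)
    have hdv : G.degree v = Fintype.card V - 1 := by
      rw [← card_neighborFinset_eq_degree, hfull v hv]
      omega
    exact hΔ v ((degree_eq_card_sub_one G v).1 hdv)
  · obtain ⟨v₁, v₂, hne, hN2⟩ := card_eq_two.1 (hN.trans hd)
    have h₁ := hfull v₁ (by simp [hN2])
    have h₂ := hfull v₂ (by simp [hN2])
    have := hK v₁ v₂ hne
    rw [h₁, h₂, inter_self] at this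
    omega
  · obtain ⟨w, hw⟩ := card_pos.1 (show 0 < #(Nᶜ.erase u) by
      rw [card_erase_of_mem (by simp [N])]
      omega)
    obtain ⟨hwu, hwN⟩ := mem_erase.1 hw
    have hsub : N ⊆ G.neighborFinset u ∩ G.neighborFinset w := fun v hv => by
      refine mem_inter.2 ⟨hv, ?_⟩
      rw [mem_neighborFinset, adj_comm, ← mem_neighborFinset, hfull v hv]
      exact hwN
    have := (card_le_card hsub).trans (hK u w (Ne.symm hwu))
    omega

theorem eta_lt_card (h3 : G.CliqueFree 3)
    (hK : ∀ v w, v ≠ w → #(G.neighborFinset v ∩ G.neighborFinset w) ≤ 2)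
    (hΔ : ∀ v, ¬ G.IsUniversal v) (h5 : 5 ≤ Fintype.card V) {u : V} (hu : 0 < G.degree u) :
    eta G u < Fintype.card V := by
  set N := G.neighborFinset u
  have hsum : ∑ v ∈ N, G.degree v < G.degree u * #Nᶜ := by
    have := sum_lt_sum
      (fun v hv => (card_neighborFinset_eq_degree G v).symm.trans_le <| card_le_card <|
        neighborFinset_subset_compl_of_cliqueFree h3 ((mem_neighborFinset _ _ _).1 hv))
      (exists_degree_lt_card_compl_neighborFinset h3 hK hΔ h5 hu)
    rwa [sum_const, card_neighborFinset_eq_degree, smul_eq_mul] at this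
  have hcard : (G.degree u : ℝ) + #Nᶜ = Fintype.card V := by
    rw [← card_neighborFinset_eq_degree]
    exact_mod_cast card_add_card_compl N
  have hd : (0 : ℝ) < G.degree u := by exact_mod_cast hu
  have : (∑ v ∈ N, (G.degree v : ℝ)) / G.degree u < #Nᶜ := by
    rw [div_lt_iff₀' hd]
    exact_mod_cast hsum
  rw [eta, one_div_mul_eq_div, ← hcard]
  linarith

theorem qIndex_lt_card_of_cliqueFree (hG : IsOuterplanar G) (hconn : G.Connected)
    (h3 : G.CliqueFree 3) (hΔ : ∀ v, ¬ G.IsUniversal v) (h5 : 5 ≤ Fintype.card V) :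
    qIndex G < Fintype.card V := by
  have : Nontrivial V := Fintype.one_lt_card_iff_nontrivial.1 (by omega)
  have hdeg : ∀ v, 0 < G.degree v := fun v => hconn.preconnected.degree_pos_of_nontrivial v
  obtain ⟨u, -, hu⟩ := exists_max_image univ (eta G) univ_nonempty
  calc qIndex G ≤ eta G u := qIndex_le_of_eta_le hdeg fun v => hu v (mem_univ v)
    _ < Fintype.card V :=
      eta_lt_card h3 (fun _ _ => hG.card_inter_neighborFinset_le_two) hΔ h5 (hdeg u)

end Eta

section Structure

variable {V : Type*} {G : SimpleGraph V}

theorem containsCopy_iff_isContained {W : Type*} {F : SimpleGraph W} :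
    ContainsCopy G F ↔ F ⊑ G :=
  ⟨fun ⟨f, hf, hadj⟩ => ⟨⟨⟨f, hadj _ _⟩, hf⟩⟩,
    fun ⟨c⟩ => ⟨c, c.injective, fun _ _ => c.toHom.map_adj⟩⟩

theorem containsCopy_congr {W W' : Type*} {F : SimpleGraph W} {F' : SimpleGraph W'}
    (e : F ≃g F') : ContainsCopy G F ↔ ContainsCopy G F' := by
  simp only [containsCopy_iff_isContained, isContained_congr_left e]

theorem containsCopy_cycleGraph_three_iff : ContainsCopy G (cycleGraph 3) ↔ ¬ G.CliqueFree 3 := by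
  rw [containsCopy_iff_isContained, cycleGraph_three_eq_top, not_cliqueFree_iff_top_isContained]

theorem containsCopy_pathGraph_four {a b c d : V} (hab : G.Adj a b) (hbc : G.Adj b c)
    (hcd : G.Adj c d) (hac : a ≠ c) (hbd : b ≠ d) (had : a ≠ d) :
    ContainsCopy G (pathGraph 4) := by
  refine ⟨![a, b, c, d], fun i j hij => ?_, fun i j hij => ?_⟩
  · have := hab.ne
    have := hbc.ne
    have := hcd.ne
    fin_cases i <;> fin_cases j <;> simp_all
  · rw [pathGraph_adj] at hij
    fin_cases i <;> fin_cases j <;> simp_all [adj_comm]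

theorem containsCopy_pathUnion_two_two {a b c d : V} (hab : G.Adj a b) (hcd : G.Adj c d)
    (hac : a ≠ c) (had : a ≠ d) (hbc : b ≠ c) (hbd : b ≠ d) :
    ContainsCopy G (pathUnion 2 2) := by
  refine ⟨fun p => ![![a, b], ![c, d]] p.1 p.2, fun p q hpq => ?_, fun p q hpq => ?_⟩
  · have := hab.ne
    have := hcd.ne
    obtain ⟨p₁, p₂⟩ := p
    obtain ⟨q₁, q₂⟩ := q
    fin_cases p₁ <;> fin_cases p₂ <;> fin_cases q₁ <;> fin_cases q₂ <;> simp_all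
  · obtain ⟨p₁, p₂⟩ := p
    obtain ⟨q₁, q₂⟩ := q
    obtain ⟨h₁, h₂⟩ := hpq
    rw [pathGraph_adj] at h₂
    fin_cases p₁ <;> fin_cases q₁ <;> fin_cases p₂ <;> fin_cases q₂ <;> simp_all [adj_comm]

theorem eq_starGraph_of_isUniversal {r : V} (hr : G.IsUniversal r)
    (h : ∀ x y, G.Adj x y → x = r ∨ y = r) : G = starGraph r := by
  ext x y
  rw [starGraph_adj]
  refine ⟨fun hxy => ⟨hxy.ne, h x y hxy⟩, fun ⟨hne, hxy⟩ => ?_⟩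
  rcases hxy with rfl | rfl
  exacts [hr hne, (hr hne.symm).symm]

theorem eq_starGraph_of_isUniversal_of_cliqueFree {r : V} (hr : G.IsUniversal r)
    (h3 : G.CliqueFree 3) : G = starGraph r :=
  eq_starGraph_of_isUniversal hr fun x y hxy => by
    by_contra! h
    exact h3 {r, x, y} (is3Clique_triple_iff.2 ⟨hr (Ne.symm h.1), hr (Ne.symm h.2), hxy⟩)

theorem _root_.SimpleGraph.Connected.exists_adj_of_mem_of_notMem (hG : G.Connected) {S : Set V} {u v : V}
    (hu : u ∈ S) (hv : v ∉ S) : ∃ y ∈ S, ∃ x ∉ S, G.Adj y x := by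
  obtain ⟨d, -, hd₁, hd₂⟩ := (hG.preconnected u v).some.exists_boundary_dart S hu hv
  exact ⟨_, hd₁, _, hd₂, d.adj⟩

variable [Fintype V]

theorem exists_adj_adj_of_connected (hG : G.Connected) (h3 : 3 ≤ Fintype.card V) :
    ∃ a b c, G.Adj b a ∧ G.Adj b c ∧ a ≠ c := by
  have : Nontrivial V := Fintype.one_lt_card_iff_nontrivial.1 (by omega)
  obtain ⟨v⟩ : Nonempty V := inferInstance
  obtain ⟨w, hvw⟩ := (G.degree_pos_iff_exists_adj v).1 (hG.preconnected.degree_pos_of_nontrivial v)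
  obtain ⟨z, -, hz⟩ := exists_mem_notMem_of_card_lt_card
    (s := {v, w}) (t := univ) ((card_le_two).trans_lt (by rw [card_univ]; omega))
  obtain ⟨y, hy, x, hx, hyx⟩ :=
    hG.exists_adj_of_mem_of_notMem (S := {v, w}) (u := v) (v := z) (by simp) (by simpa using hz)
  simp only [Set.mem_insert_iff, Set.mem_singleton_iff, not_or] at hy hx
  rcases hy with rfl | rfl
  exacts [⟨x, y, w, hyx, hvw, hx.2⟩, ⟨x, y, v, hyx, hvw.symm, hx.1⟩]

theorem exists_eq_starGraph_of_pathGraph_four_free (hG : G.Connected)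
    (h4 : 4 ≤ Fintype.card V) (hP4 : ¬ ContainsCopy G (pathGraph 4)) :
    ∃ r, G = starGraph r := by
  obtain ⟨a, b, c, hba, hbc, hac⟩ := exists_adj_adj_of_connected hG (by omega)
  -- an edge `y x` leaving the closed neighbourhood of `b` extends to the path `x y b z`
  have hb : G.IsUniversal b := fun x hbx => by
    by_contra hx
    obtain ⟨y, hy, x', hx', hyx'⟩ := hG.exists_adj_of_mem_of_notMem (S := closedNbhd G b) (v := x)
      (Set.mem_insert b _) (by simp [closedNbhd, hbx.symm, hx])
    simp only [closedNbhd, Set.mem_insert_iff, mem_neighborSet, not_or] at hy hx'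
    rcases hy with rfl | hby
    · exact hx'.2 hyx'
    by_cases hya : y = a
    · subst hya
      exact hP4 (containsCopy_pathGraph_four hyx'.symm hba.symm hbc hx'.1 hac
        fun h => hx'.2 (h ▸ hbc))
    · exact hP4 (containsCopy_pathGraph_four hyx'.symm hby.symm hba hx'.1 hya
        fun h => hx'.2 (h ▸ hba))
  refine ⟨b, eq_starGraph_of_isUniversal hb fun x y hxy => ?_⟩
  by_contra! h
  obtain ⟨z, -, hz⟩ := exists_mem_notMem_of_card_lt_card
    (s := {b, x, y}) (t := univ) ((card_le_three).trans_lt (by rw [card_univ]; omega))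
  simp only [mem_insert, mem_singleton, not_or] at hz
  exact hP4 (containsCopy_pathGraph_four (hb (Ne.symm hz.1)).symm (hb (Ne.symm h.1)) hxy hz.2.1
    (Ne.symm h.2) hz.2.2)

theorem exists_eq_starGraph_of_pathUnion_free (hG : G.Connected)
    (h4 : 4 ≤ Fintype.card V) (h2P2 : ¬ ContainsCopy G (pathUnion 2 2)) :
    ∃ r, G = starGraph r := by
  have hdisj {x y z w : V} (hxy : G.Adj x y) (hzw : G.Adj z w) :
      x = z ∨ x = w ∨ y = z ∨ y = w := by
    by_contra! h
    exact h2P2 (containsCopy_pathUnion_two_two hxy hzw h.1 h.2.1 h.2.2.1 h.2.2.2)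
  obtain ⟨a, b, c, hba, hbc, hac⟩ := exists_adj_adj_of_connected hG (by omega)
  by_cases hadj : G.Adj a c
  · -- an edge leaving the triangle `abc` is disjoint from the opposite side
    exfalso
    obtain ⟨z, -, hz⟩ := exists_mem_notMem_of_card_lt_card
      (s := {a, b, c}) (t := univ) ((card_le_three).trans_lt (by rw [card_univ]; omega))
    obtain ⟨y, hy, x, hx, hyx⟩ :=
      hG.exists_adj_of_mem_of_notMem (S := {a, b, c}) (u := a) (v := z) (by simp) (by simpa using hz)
    simp only [Set.mem_insert_iff, Set.mem_singleton_iff, not_or] at hy hx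
    have := hba.ne
    have := hbc.ne
    have := hdisj hyx hbc
    have := hdisj hyx hadj
    have := hdisj hyx hba
    grind
  have hedge : ∀ x y, G.Adj x y → x = b ∨ y = b := fun x y hxy => by
    have := hdisj hxy hba
    have := hdisj hxy hbc
    have := hxy.ne
    by_contra!
    grind [adj_comm]
  have : Nontrivial V := Fintype.one_lt_card_iff_nontrivial.1 (by omega)
  refine ⟨b, eq_starGraph_of_isUniversal (fun x hbx => ?_) hedge⟩
  obtain ⟨t, hxt⟩ := (G.degree_pos_iff_exists_adj x).1 (hG.preconnected.degree_pos_of_nontrivial x)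
  rcases hedge x t hxt with rfl | rfl
  exacts [absurd rfl hbx, hxt.symm]

noncomputable def starGraphIsoCompleteBipartiteGraph (r : V) :
    starGraph r ≃g completeBipartiteGraph (Fin 1) (Fin (Fintype.card V - 1)) :=
  RelIso.symm
    ({ toEquiv := Equiv.sumCompl (· = r)
       map_rel_iff' := by
        rintro (⟨x, hx⟩ | ⟨x, hx⟩) (⟨y, hy⟩ | ⟨y, hy⟩) <;> simp_all [Ne.symm] } :
      completeBipartiteGraph {v // v = r} {v // ¬v = r} ≃g starGraph r) |>.trans
    (completeBipartiteGraphCongr (Equiv.ofUnique _ _)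
      (Fintype.equivFinOfCardEq (by simp [Fintype.card_subtype_compl])))

end Structure

theorem star_maximizes_small_cases_general
    {V W : Type*} [Fintype V] {n : ℕ} (hn : 5 ≤ n)
    (F : SimpleGraph W)
    (hF : Nonempty (F ≃g SimpleGraph.pathGraph 4) ∨
      Nonempty (F ≃g pathUnion 2 2) ∨ Nonempty (F ≃g SimpleGraph.cycleGraph 3))
    (G : SimpleGraph V) (hcard : Fintype.card V = n)
    (hconn : G.Connected) (hout : IsOuterplanar G) (hfree : ¬ ContainsCopy G F)
    (hmax : ∀ H : SimpleGraph V, H.Connected → IsOuterplanar H → ¬ ContainsCopy H F →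
      qIndex H ≤ qIndex G) :
    Nonempty (G ≃g completeBipartiteGraph (Fin 1) (Fin (n - 1))) := by
  subst hcard
  suffices ∃ r, G = starGraph r by
    obtain ⟨r, rfl⟩ := this
    exact ⟨starGraphIsoCompleteBipartiteGraph r⟩
  rcases hF with ⟨⟨e⟩⟩ | ⟨⟨e⟩⟩ | ⟨⟨e⟩⟩
  · exact exists_eq_starGraph_of_pathGraph_four_free hconn (by omega)
      ((containsCopy_congr e).not.1 hfree)
  · exact exists_eq_starGraph_of_pathUnion_free hconn (by omega)
      ((containsCopy_congr e).not.1 hfree)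
  have hC3 {H : SimpleGraph V} : ContainsCopy H F ↔ ¬ H.CliqueFree 3 :=
    (containsCopy_congr e).trans containsCopy_cycleGraph_three_iff
  have h3 : G.CliqueFree 3 := not_not.1 (hC3.not.1 hfree)
  obtain ⟨r, hr⟩ : ∃ r, G.IsUniversal r := by
    by_contra! hΔ
    have : Nontrivial V := Fintype.one_lt_card_iff_nontrivial.1 (by omega)
    obtain ⟨r⟩ : Nonempty V := inferInstance
    have := hmax (starGraph r) (connected_starGraph r) (isOuterplanar_starGraph r)
      (hC3.not.2 (not_not.2 ((isAcyclic_starGraph r).cliqueFree le_rfl)))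
    have := card_le_qIndex_starGraph r
    have := qIndex_lt_card_of_cliqueFree hout hconn h3 hΔ hn
    linarith
  exact ⟨r, eq_starGraph_of_isUniversal_of_cliqueFree hr h3⟩

/-- For `F ∈ {P₄, 2P₂, C₃}` and `n ≥ 5`, the unique maximizer of the `Q`-index among
connected `F`-free outerplanar graphs of order `n` is the star `K_{1,n-1}`. -/
theorem star_maximizes_small_cases
    {V W : Type*} [Fintype V] [Fintype W] {n : ℕ} (hn : 5 ≤ n)
    (F : SimpleGraph W)
    (hF : Nonempty (F ≃g SimpleGraph.pathGraph 4) ∨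
      Nonempty (F ≃g pathUnion 2 2) ∨ Nonempty (F ≃g SimpleGraph.cycleGraph 3))
    (G : SimpleGraph V) (hcard : Fintype.card V = n)
    (hconn : G.Connected) (hout : IsOuterplanar G) (hfree : ¬ ContainsCopy G F)
    (hmax : ∀ H : SimpleGraph V, H.Connected → IsOuterplanar H → ¬ ContainsCopy H F →
      qIndex H ≤ qIndex G) :
    Nonempty (G ≃g completeBipartiteGraph (Fin 1) (Fin (n - 1))) :=
  star_maximizes_small_cases_general hn F hF G hcard hconn hout hfree hmax
end OuterplanarQ
end

section
/- Let G be a connected finite simple graph with vertices u, v, w such that uw ∉ E(G) and vw ∈ E(G), and let x be the Perron vector of G. If x_u ≥ x_v, then q(G − vw + uw) > q(G), where G − vw + uw is the graph obtained from G by deleting the edge vw and adding the edge uw. -/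
open scoped Classical

/-!
Rotating the edge `vw` to `uw` changes `Q` by `(e_u + e_w)(e_u + e_w)ᵀ - (e_v + e_w)(e_v + e_w)ᵀ`.
Hence the Rayleigh quotient of `x` for `Q(G')` is `q(G) + (x_u + x_w)² - (x_v + x_w)² ≥ q(G)`, and
`q(G') ≥ q(G)`. If equality held, `x` would maximise the Rayleigh quotient of `Q(G')` and so be an
eigenvector for `q(G')`, because `q(G') I - Q(G')` is positive semidefinite. But the `u`-th row gives
`(Q(G') x)_u = q(G) x_u + x_u + x_w > q(G) x_u`.
-/

open Matrix SimpleGraph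
open scoped MatrixOrder

theorem Matrix.mem_spectrum_iff_exists_mulVec_eq_smul {n K : Type*} [Fintype n] [DecidableEq n]
    [Field K] (A : Matrix n n K) (μ : K) :
    μ ∈ spectrum K A ↔ ∃ x : n → K, x ≠ 0 ∧ A *ᵥ x = μ • x := by
  rw [← spectrum_toLin', ← Module.End.hasEigenvalue_iff_mem_spectrum,
    Module.End.hasEigenvalue_iff, Submodule.ne_bot_iff]
  simp [and_comm]

section Hermitian

variable {n : Type*} [Fintype n] [DecidableEq n] {A : Matrix n n ℝ}

theorem Matrix.IsHermitian.posSemidef_sSup_spectrum_sub (hA : A.IsHermitian) :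
    (algebraMap ℝ (Matrix n n ℝ) (sSup (spectrum ℝ A)) - A).PosSemidef := by
  rw [← Matrix.le_iff, le_algebraMap_iff_spectrum_le hA.isSelfAdjoint]
  exact fun μ hμ => le_csSup finite_real_spectrum.bddAbove hμ

theorem Matrix.IsHermitian.mulVec_eq_sSup_spectrum_smul (hA : A.IsHermitian) {x : n → ℝ}
    (hx : sSup (spectrum ℝ A) * (x ⬝ᵥ x) ≤ x ⬝ᵥ A *ᵥ x) :
    A *ᵥ x = sSup (spectrum ℝ A) • x := by
  set N := algebraMap ℝ (Matrix n n ℝ) (sSup (spectrum ℝ A)) - A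
  have hN : N.PosSemidef := hA.posSemidef_sSup_spectrum_sub
  have hNx : N *ᵥ x = sSup (spectrum ℝ A) • x - A *ᵥ x := by
    rw [sub_mulVec, Algebra.algebraMap_eq_smul_one, smul_mulVec, one_mulVec]
  have hzero : star x ⬝ᵥ N *ᵥ x = 0 := by
    refine le_antisymm ?_ (hN.dotProduct_mulVec_nonneg x)
    rw [hNx, star_trivial, dotProduct_sub, dotProduct_smul, smul_eq_mul]
    linarith
  rw [hN.dotProduct_mulVec_zero_iff, hNx, sub_eq_zero] at hzero
  exact hzero.symm

end Hermitian

namespace SimpleGraph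

variable {V : Type*}

theorem degree_edge {a b : V} (hab : a ≠ b) (i : V) [Fintype ((edge a b).neighborSet i)] :
    (edge a b).degree i = if i = a ∨ i = b then 1 else 0 := by
  have hN : (edge a b).neighborFinset i =
      (if i = a then {b} else ∅) ∪ (if i = b then {a} else ∅) := by
    ext j
    simp only [mem_neighborFinset, edge_adj]
    split_ifs <;> simp <;> grind
  rw [← card_neighborFinset_eq_degree, hN]
  by_cases hia : i = a <;> by_cases hib : i = b <;> simp_all

theorem degree_sup_of_disjoint {H K : SimpleGraph V} (h : Disjoint H K) (i : V)
    [Fintype ((H ⊔ K).neighborSet i)] [Fintype (H.neighborSet i)] [Fintype (K.neighborSet i)] :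
    (H ⊔ K).degree i = H.degree i + K.degree i := by
  simp only [← card_neighborFinset_eq_degree, neighborFinset_sup_of_disjoint i h,
    Finset.card_disjUnion]

end SimpleGraph

namespace OuterplanarQ

section Rotation

variable {V : Type*}

theorem delEdge_sup_edge {G : SimpleGraph V} {v w : V} (hvw : G.Adj v w) :
    delEdge G v w ⊔ edge v w = G := by
  ext a b
  simp only [delEdge, sup_adj, deleteEdges_adj, edge_adj, Set.mem_singleton_iff, Sym2.eq_iff]
  grind [G.ne_of_adj, G.adj_symm]

variable [Fintype V]

theorem qMatrix_isHermitian (G : SimpleGraph V) : (qMatrix G).IsHermitian := by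
  ext i j
  by_cases h : i = j
  · subst h
    simp [qMatrix]
  · simp [qMatrix, h, Ne.symm h, G.adj_comm]

theorem qIndex_eq_sSup_spectrum (G : SimpleGraph V) :
    qIndex G = sSup (spectrum ℝ (qMatrix G)) := by
  unfold qIndex
  congr 1
  ext μ
  exact (mem_spectrum_iff_exists_mulVec_eq_smul _ μ).symm

theorem qMatrix_edge {a b : V} (hab : a ≠ b) :
    qMatrix (edge a b) =
      vecMulVec (Pi.single a 1 + Pi.single b 1) (Pi.single a 1 + Pi.single b 1) := by
  ext i j
  simp only [qMatrix, degree_edge hab, edge_adj, vecMulVec_apply, Pi.add_apply, Pi.single_apply]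
  by_cases hia : i = a <;> by_cases hib : i = b <;> by_cases hja : j = a <;> by_cases hjb : j = b <;>
    simp_all [eq_comm (a := j)]

theorem qMatrix_edge_mulVec {a b : V} (hab : a ≠ b) (x : V → ℝ) :
    qMatrix (edge a b) *ᵥ x = (x a + x b) • (Pi.single a 1 + Pi.single b 1) := by
  rw [qMatrix_edge hab, vecMulVec_mulVec, op_smul_eq_smul, add_dotProduct, single_one_dotProduct,
    single_one_dotProduct]

theorem qMatrix_sup_of_disjoint {H K : SimpleGraph V} (h : Disjoint H K) :
    qMatrix (H ⊔ K) = qMatrix H + qMatrix K := by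
  ext i j
  have hadj := disjoint_left.mp h i j
  by_cases hij : i = j
  · subst hij
    simp [qMatrix, degree_sup_of_disjoint h]
  · by_cases hH : H.Adj i j <;> by_cases hK : K.Adj i j <;> simp_all [qMatrix]

theorem qMatrix_rotate {G : SimpleGraph V} {u v w : V} (huw : ¬ G.Adj u w) (hvw : G.Adj v w) :
    qMatrix (addEdge (delEdge G v w) u w) + qMatrix (edge v w) =
      qMatrix G + qMatrix (edge u w) := by
  have hdel_uw : Disjoint (delEdge G v w) (edge u w) :=
    (disjoint_edge _).mpr fun h => huw (deleteEdges_le _ h)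
  have hdel_vw : Disjoint (delEdge G v w) (edge v w) := (disjoint_edge _).mpr (by simp [delEdge])
  conv_rhs => rw [← delEdge_sup_edge hvw]
  rw [show addEdge (delEdge G v w) u w = delEdge G v w ⊔ edge u w from rfl,
    qMatrix_sup_of_disjoint hdel_uw, qMatrix_sup_of_disjoint hdel_vw]
  abel

end Rotation

theorem qIndex_lt_rotate_of_perron_general
    {V : Type*} [Fintype V] (G : SimpleGraph V)
    (u v w : V) (huw : ¬ G.Adj u w) (hne : u ≠ w) (hvw : G.Adj v w)
    (x : V → ℝ) (hpos : ∀ i : V, 0 < x i)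
    (heig : (qMatrix G).mulVec x = qIndex G • x)
    (hx : x v ≤ x u) :
    qIndex G < qIndex (addEdge (delEdge G v w) u w) := by
  set G' := addEdge (delEdge G v w) u w
  have huv : u ≠ v := fun h => huw (h ▸ hvw)
  have hQ : qMatrix G' *ᵥ x = qIndex G • x + (x u + x w) • (Pi.single u 1 + Pi.single w 1)
      - (x v + x w) • (Pi.single v 1 + Pi.single w 1) := by
    rw [← heig, ← qMatrix_edge_mulVec hne, ← qMatrix_edge_mulVec (G.ne_of_adj hvw), ← add_mulVec,
      ← qMatrix_rotate huw hvw, add_mulVec, add_sub_cancel_right]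
  have hrayleigh : qIndex G * (x ⬝ᵥ x) ≤ x ⬝ᵥ qMatrix G' *ᵥ x := by
    simp only [hQ, dotProduct_sub, dotProduct_add, dotProduct_smul, dotProduct_single_one,
      smul_eq_mul]
    nlinarith [hpos u, hpos v, hpos w]
  have hrow : (qMatrix G' *ᵥ x) u = qIndex G * x u + (x u + x w) := by
    simp [hQ, huv, hne]
  by_contra! hle
  have hxx : 0 ≤ x ⬝ᵥ x := by simpa using dotProduct_star_self_nonneg x
  have heig' := (qMatrix_isHermitian G').mulVec_eq_sSup_spectrum_smul (x := x) <| by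
    rw [← qIndex_eq_sSup_spectrum]
    exact (mul_le_mul_of_nonneg_right hle hxx).trans hrayleigh
  rw [← qIndex_eq_sSup_spectrum, funext_iff] at heig'
  have := heig' u
  simp only [hrow, Pi.smul_apply, smul_eq_mul] at this
  nlinarith [hpos u, hpos w]

/-- Edge-rotation lemma via the Perron vector: if `uw ∉ E(G)`, `vw ∈ E(G)` and the
Perron vector of `Q(G)` satisfies `x_u ≥ x_v`, then `q(G - vw + uw) > q(G)`. -/
theorem qIndex_lt_rotate_of_perron
    {V : Type*} [Fintype V] (G : SimpleGraph V) (hconn : G.Connected)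
    (u v w : V) (huw : ¬ G.Adj u w) (hne : u ≠ w) (hvw : G.Adj v w)
    (x : V → ℝ) (hpos : ∀ i : V, 0 < x i) (hunit : ∑ i : V, x i ^ 2 = 1)
    (heig : (qMatrix G).mulVec x = qIndex G • x)
    (hx : x v ≤ x u) :
    qIndex G < qIndex (addEdge (delEdge G v w) u w) :=
  qIndex_lt_rotate_of_perron_general G u v w huw hne hvw x hpos heig hx
end OuterplanarQ
end
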